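/- arXiv:1609.07637 — 4 statements merged into one kernel-verified Lean document; each statement's English description precedes it below -/
import Mathlib

section
/- If the distribution of a square-integrable random variable X is symmetric about a point x₀ (i.e., X − x₀ and x₀ − X have the same law), then for all α ∈ (0,1), (e_α(X) + e_{1−α}(X))/2 = x₀. -/
/-!
Reflection about `x₀` preserves the law of `X` and exchanges the upper partial moment
`∫ (X - c)₊` with the lower one `∫ (2 x₀ - c - X)₊`, so it turns an `α`-expectile `x` into a
`(1 - α)`-expectile `2 x₀ - x`; uniqueness of expectiles then forces `y = 2 x₀ - x`.
Uniqueness holds because `t ↦ ∫ (X - t)₊` is antitone, `t ↦ ∫ (t - X)₊` is monotone, and their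
difference `E X - t` is strictly decreasing.
-/

open MeasureTheory

def IsExpectile {Ω : Type*} [MeasurableSpace Ω] (μ : Measure Ω) (X : Ω → ℝ) (α t : ℝ) : Prop :=
  α * ∫ ω, max (X ω - t) 0 ∂μ = (1 - α) * ∫ ω, max (t - X ω) 0 ∂μ

section

variable {Ω : Type*} [MeasurableSpace Ω] {μ : Measure Ω} {X : Ω → ℝ}

theorem integral_comp_sub_eq_integral_comp_rsub_of_map_eq {x₀ : ℝ} (hX : AEMeasurable X μ)
    (hsym : μ.map (fun ω => X ω - x₀) = μ.map (fun ω => x₀ - X ω)) {f : ℝ → ℝ}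
    (hf : Continuous f) :
    ∫ ω, f (X ω - x₀) ∂μ = ∫ ω, f (x₀ - X ω) ∂μ := by
  rw [← integral_map (hX.sub_const x₀) hf.aestronglyMeasurable, hsym,
    integral_map (hX.const_sub x₀) hf.aestronglyMeasurable]

theorem integral_max_sub_eq_integral_max_rsub_of_map_eq {x₀ : ℝ} (hX : AEMeasurable X μ)
    (hsym : μ.map (fun ω => X ω - x₀) = μ.map (fun ω => x₀ - X ω)) {c d : ℝ}
    (hcd : c + d = 2 * x₀) :
    ∫ ω, max (X ω - c) 0 ∂μ = ∫ ω, max (d - X ω) 0 ∂μ := by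
  have := integral_comp_sub_eq_integral_comp_rsub_of_map_eq hX hsym
    (f := fun u => max (u - (c - x₀)) 0) (by fun_prop)
  convert this using 4 <;> linarith

theorem integral_max_sub_sub_integral_max_rsub [IsFiniteMeasure μ] (hX : Integrable X μ)
    (t : ℝ) :
    ∫ ω, max (X ω - t) 0 ∂μ - ∫ ω, max (t - X ω) 0 ∂μ = ∫ ω, X ω ∂μ - μ.real Set.univ * t := by
  have hpos : Integrable (fun ω => max (X ω - t) 0) μ := (hX.sub (integrable_const t)).pos_part
  have hneg : Integrable (fun ω => max (t - X ω) 0) μ := ((integrable_const t).sub hX).pos_part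
  rw [← integral_sub hpos hneg]
  have hsplit (ω : Ω) : max (X ω - t) 0 - max (t - X ω) 0 = X ω - t := by
    rw [← neg_sub (X ω) t, max_zero_sub_max_neg_zero_eq_self]
  simp_rw [hsplit]
  rw [integral_sub hX (integrable_const t), integral_const, smul_eq_mul]

namespace IsExpectile

variable {α s t : ℝ}

theorem not_lt [IsFiniteMeasure μ] [NeZero μ] (hX : Integrable X μ) (hα : α ∈ Set.Ioo 0 1)
    (hs : IsExpectile μ X α s) (ht : IsExpectile μ X α t) : ¬ s < t := by
  intro hst
  have hg : ∫ ω, max (X ω - t) 0 ∂μ ≤ ∫ ω, max (X ω - s) 0 ∂μ :=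
    integral_mono (hX.sub (integrable_const t)).pos_part (hX.sub (integrable_const s)).pos_part
      fun ω => max_le_max (by linarith) le_rfl
  have hh : ∫ ω, max (s - X ω) 0 ∂μ ≤ ∫ ω, max (t - X ω) 0 ∂μ :=
    integral_mono ((integrable_const s).sub hX).pos_part ((integrable_const t).sub hX).pos_part
      fun ω => max_le_max (by linarith) le_rfl
  have hgap := integral_max_sub_sub_integral_max_rsub hX s
  have hgap' := integral_max_sub_sub_integral_max_rsub hX t
  have hμ : 0 < μ.real Set.univ := measureReal_univ_pos
  unfold IsExpectile at hs ht
  set a := ∫ ω, max (X ω - s) 0 ∂μ - ∫ ω, max (X ω - t) 0 ∂μ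
  set b := ∫ ω, max (t - X ω) 0 ∂μ - ∫ ω, max (s - X ω) 0 ∂μ
  have hab : 0 < a + b := by linarith [mul_pos hμ (sub_pos.2 hst)]
  have hzero : α * a + (1 - α) * b = 0 := by linarith
  -- `α a + (1 - α) b ≥ α (1 - α) (a + b)` since `a, b ≥ 0`
  nlinarith [mul_pos (mul_pos hα.1 (sub_pos.2 hα.2)) hab,
    mul_nonneg (sq_nonneg α) (sub_nonneg.2 hg), mul_nonneg (sq_nonneg (1 - α)) (sub_nonneg.2 hh)]

theorem unique [IsFiniteMeasure μ] [NeZero μ] (hX : Integrable X μ) (hα : α ∈ Set.Ioo 0 1)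
    (hs : IsExpectile μ X α s) (ht : IsExpectile μ X α t) : s = t :=
  le_antisymm (le_of_not_gt (ht.not_lt hX hα hs)) (le_of_not_gt (hs.not_lt hX hα ht))

theorem reflect {x₀ : ℝ} (hX : AEMeasurable X μ)
    (hsym : μ.map (fun ω => X ω - x₀) = μ.map (fun ω => x₀ - X ω)) (ht : IsExpectile μ X α t) :
    IsExpectile μ X (1 - α) (2 * x₀ - t) := by
  rw [IsExpectile, sub_sub_cancel,
    integral_max_sub_eq_integral_max_rsub_of_map_eq hX hsym (c := 2 * x₀ - t) (d := t) (by ring),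
    ← integral_max_sub_eq_integral_max_rsub_of_map_eq hX hsym (c := t) (d := 2 * x₀ - t) (by ring)]
  exact ht.symm

end IsExpectile

end

theorem expectile_symmetric_distribution_general
    {Ω : Type*} [MeasurableSpace Ω] (μ : Measure Ω) [IsProbabilityMeasure μ]
    (X : Ω → ℝ) (hX : MemLp X 2 μ) (x₀ : ℝ)
    (hsym : Measure.map (fun ω => X ω - x₀) μ = Measure.map (fun ω => x₀ - X ω) μ)
    (α : ℝ) (hα : α ∈ Set.Ioo (0:ℝ) 1) (x y : ℝ)
    (hx : α * ∫ ω, max (X ω - x) 0 ∂μ = (1-α) * ∫ ω, max (x - X ω) 0 ∂μ)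
    (hy : (1-α) * ∫ ω, max (X ω - y) 0 ∂μ = (1-(1-α)) * ∫ ω, max (y - X ω) 0 ∂μ) :
    (x + y) / 2 = x₀ := by
  have hXi : Integrable X μ := hX.integrable one_le_two
  have hx' : IsExpectile μ X (1 - α) (2 * x₀ - x) :=
    IsExpectile.reflect hXi.aemeasurable hsym hx
  have hα' : 1 - α ∈ Set.Ioo (0 : ℝ) 1 := ⟨sub_pos.2 hα.2, sub_lt_self 1 hα.1⟩
  have : y = 2 * x₀ - x := IsExpectile.unique hXi hα' hy hx'
  linarith

theorem expectile_symmetric_distribution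
    {Ω : Type*} [MeasurableSpace Ω] (μ : Measure Ω) [IsProbabilityMeasure μ]
    (X : Ω → ℝ) (hX : MemLp X 2 μ) (hm : Measurable X) (x₀ : ℝ)
    (hsym : Measure.map (fun ω => X ω - x₀) μ = Measure.map (fun ω => x₀ - X ω) μ)
    (α : ℝ) (hα : α ∈ Set.Ioo (0:ℝ) 1) (x y : ℝ)
    (hx : α * ∫ ω, max (X ω - x) 0 ∂μ = (1-α) * ∫ ω, max (x - X ω) 0 ∂μ)
    (hy : (1-α) * ∫ ω, max (X ω - y) 0 ∂μ = (1-(1-α)) * ∫ ω, max (y - X ω) 0 ∂μ) :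
    (x + y) / 2 = x₀ :=
  expectile_symmetric_distribution_general μ X hX x₀ hsym α hα x y hx hy
end

section
/- If X ≤ Y almost surely and P(X < Y) > 0, where X, Y are square-integrable random variables, then e_α(X) < e_α(Y) for every α ∈ (0,1) (strict stochastic monotonicity of expectiles). -/
/-!
The expectile `x` of `X` is the zero of `t ↦ E[s_t(X)]` for the identification function
`s_t(v) = α (v - t)₊ - (1 - α) (t - v)₊`. For `0 < α < 1` this function is strictly increasing
in `v` and antitone in `t`. Hence `0 = E[s_x(X)] < E[s_x(Y)]`, since `X ≤ Y` with `X < Y` on a set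
of positive probability, while `y ≤ x` would give `E[s_x(Y)] ≤ E[s_y(Y)] = 0`.
-/

open MeasureTheory

theorem integral_lt_integral_of_ae_le_of_measure_setOf_lt_pos {Ω : Type*} [MeasurableSpace Ω]
    {μ : Measure Ω} {f g : Ω → ℝ} (hf : Integrable f μ) (hg : Integrable g μ)
    (hle : f ≤ᵐ[μ] g) (hlt : 0 < μ {ω | f ω < g ω}) :
    ∫ ω, f ω ∂μ < ∫ ω, g ω ∂μ := by
  rw [← sub_pos, ← integral_sub hg hf, integral_pos_iff_support_of_nonneg_ae
    (hle.mono fun _ => sub_nonneg.2) (hg.sub hf)]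
  exact hlt.trans_le (measure_mono fun ω hω => (sub_pos.2 hω).ne')

section PosPart

variable {Ω : Type*} [MeasurableSpace Ω] {μ : Measure Ω} [IsFiniteMeasure μ] {X : Ω → ℝ}

theorem MeasureTheory.Integrable.max_sub_const_zero (hX : Integrable X μ) (t : ℝ) :
    Integrable (fun ω => max (X ω - t) 0) μ :=
  (hX.sub (integrable_const t)).pos_part

theorem MeasureTheory.Integrable.max_const_sub_zero (hX : Integrable X μ) (t : ℝ) :
    Integrable (fun ω => max (t - X ω) 0) μ :=
  ((integrable_const t).sub hX).pos_part

end PosPart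

noncomputable def expectileScore (α t v : ℝ) : ℝ :=
  α * max (v - t) 0 - (1 - α) * max (t - v) 0

namespace expectileScore

variable {α : ℝ}

theorem strictMono (hα : α ∈ Set.Ioo (0 : ℝ) 1) (t : ℝ) : StrictMono (expectileScore α t) := by
  intro v w hvw
  obtain ⟨hα0, hα1⟩ := hα
  simp only [expectileScore, max_def]
  split_ifs <;> nlinarith

theorem antitone_threshold (hα : α ∈ Set.Icc (0 : ℝ) 1) (v : ℝ) :
    Antitone fun t => expectileScore α t v := by
  intro s t hst
  obtain ⟨hα0, hα1⟩ := hα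
  simp only [expectileScore, max_def]
  split_ifs <;> nlinarith

section Integral

variable {Ω : Type*} [MeasurableSpace Ω] {μ : Measure Ω} [IsFiniteMeasure μ] {X : Ω → ℝ}

theorem integrable_comp (hX : Integrable X μ) (t : ℝ) :
    Integrable (fun ω => expectileScore α t (X ω)) μ :=
  ((hX.max_sub_const_zero t).const_mul α).sub
    ((hX.max_const_sub_zero t).const_mul (1 - α))

theorem integral_comp (hX : Integrable X μ) (t : ℝ) :
    ∫ ω, expectileScore α t (X ω) ∂μ =
      α * ∫ ω, max (X ω - t) 0 ∂μ - (1 - α) * ∫ ω, max (t - X ω) 0 ∂μ := by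
  rw [← integral_const_mul, ← integral_const_mul, ← integral_sub
    ((hX.max_sub_const_zero t).const_mul α)
    ((hX.max_const_sub_zero t).const_mul (1 - α))]
  rfl

end Integral

end expectileScore

open expectileScore in
theorem expectile_strict_monotone
    {Ω : Type*} [MeasurableSpace Ω] (μ : Measure Ω) [IsProbabilityMeasure μ]
    (X Y : Ω → ℝ) (hX : MemLp X 2 μ) (hY : MemLp Y 2 μ)
    (hle : ∀ᵐ ω ∂μ, X ω ≤ Y ω) (hlt : 0 < μ {ω | X ω < Y ω})
    (α : ℝ) (hα : α ∈ Set.Ioo (0:ℝ) 1) (x y : ℝ)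
    (hx : α * ∫ ω, max (X ω - x) 0 ∂μ = (1-α) * ∫ ω, max (x - X ω) 0 ∂μ)
    (hy : α * ∫ ω, max (Y ω - y) 0 ∂μ = (1-α) * ∫ ω, max (y - Y ω) 0 ∂μ) :
    x < y := by
  have intX : Integrable X μ := hX.integrable one_le_two
  have intY : Integrable Y μ := hY.integrable one_le_two
  have hx0 : ∫ ω, expectileScore α x (X ω) ∂μ = 0 := by rw [integral_comp intX, hx, sub_self]
  have hy0 : ∫ ω, expectileScore α y (Y ω) ∂μ = 0 := by rw [integral_comp intY, hy, sub_self]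
  have hXY : ∫ ω, expectileScore α x (X ω) ∂μ < ∫ ω, expectileScore α x (Y ω) ∂μ :=
    integral_lt_integral_of_ae_le_of_measure_setOf_lt_pos (integrable_comp intX x)
      (integrable_comp intY x) (hle.mono fun _ h => (strictMono hα x).monotone h)
      (hlt.trans_le (measure_mono fun _ h => strictMono hα x h))
  by_contra! hyx
  have hYY : ∫ ω, expectileScore α x (Y ω) ∂μ ≤ ∫ ω, expectileScore α y (Y ω) ∂μ :=
    integral_mono (integrable_comp intY x) (integrable_comp intY y)
      fun ω => antitone_threshold (Set.Ioo_subset_Icc_self hα) (Y ω) hyx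
  linarith
end

section
/- For α ∈ [1/2, 1) and square-integrable random variables X, Y, the expectile is subadditive: e_α(X+Y) ≤ e_α(X) + e_α(Y). -/
/-!
With the identification function `V α t = α t₊ - (1 - α) t₋`, `e_α(X)` is the zero of the decreasing function
`c ↦ E[V α (X - c)]`. For `α ≥ 1/2` the function `V α` is subadditive, hence
`E[V α (X + Y - (x + y))] ≤ E[V α (X - x)] + E[V α (Y - y)] = 0`, and since `c ↦ E[V α (X + Y - c)]`
decreases with slope at least `1 - α > 0`, its zero `z` lies to the left of `x + y`.
-/

open MeasureTheory

noncomputable def expectileIdentification (α t : ℝ) : ℝ :=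
  α * max t 0 - (1 - α) * max (-t) 0

namespace expectileIdentification

lemma of_nonneg {α t : ℝ} (h : 0 ≤ t) : expectileIdentification α t = α * t := by
  rw [expectileIdentification, max_eq_left h, max_eq_right (by linarith)]
  ring

lemma of_nonpos {α t : ℝ} (h : t ≤ 0) : expectileIdentification α t = (1 - α) * t := by
  rw [expectileIdentification, max_eq_right h, max_eq_left (by linarith)]
  ring

lemma sub_eq_max (α a c : ℝ) :
    expectileIdentification α (a - c) = α * max (a - c) 0 - (1 - α) * max (c - a) 0 := by
  rw [expectileIdentification, neg_sub]

lemma add_le {α : ℝ} (hα : 1 / 2 ≤ α) (u v : ℝ) :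
    expectileIdentification α (u + v)
      ≤ expectileIdentification α u + expectileIdentification α v := by
  rcases le_total u 0 with hu | hu <;> rcases le_total v 0 with hv | hv <;>
    rcases le_total (u + v) 0 with huv | huv <;>
    simp only [of_nonneg, of_nonpos, *] <;> nlinarith

lemma add_mul_sub_le {α : ℝ} (hα : 1 / 2 ≤ α) {s t : ℝ} (hst : s ≤ t) :
    expectileIdentification α s + (1 - α) * (t - s) ≤ expectileIdentification α t := by
  rcases le_total s 0 with hs | hs <;> rcases le_total t 0 with ht | ht <;>
    simp only [of_nonneg, of_nonpos, *] <;> nlinarith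

end expectileIdentification

open expectileIdentification

section Integral

variable {Ω : Type*} [MeasurableSpace Ω] {μ : Measure Ω} {g : Ω → ℝ}

lemma integrable_expectileIdentification [IsFiniteMeasure μ] (hg : Integrable g μ) (α c : ℝ) :
    Integrable (fun ω ↦ expectileIdentification α (g ω - c)) μ := by
  have h₁ : Integrable (fun ω ↦ max (g ω - c) 0) μ := (hg.sub (integrable_const c)).pos_part
  have h₂ : Integrable (fun ω ↦ max (c - g ω) 0) μ := ((integrable_const c).sub hg).pos_part
  simp only [sub_eq_max]
  exact (h₁.const_mul α).sub (h₂.const_mul (1 - α))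

lemma integral_expectileIdentification [IsFiniteMeasure μ] (hg : Integrable g μ) (α c : ℝ) :
    ∫ ω, expectileIdentification α (g ω - c) ∂μ
      = α * ∫ ω, max (g ω - c) 0 ∂μ - (1 - α) * ∫ ω, max (c - g ω) 0 ∂μ := by
  have h₁ : Integrable (fun ω ↦ max (g ω - c) 0) μ := (hg.sub (integrable_const c)).pos_part
  have h₂ : Integrable (fun ω ↦ max (c - g ω) 0) μ := ((integrable_const c).sub hg).pos_part
  simp only [sub_eq_max]
  rw [integral_sub (h₁.const_mul α) (h₂.const_mul (1 - α)), integral_const_mul,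
    integral_const_mul]

lemma integral_expectileIdentification_add_mul_sub_le [IsProbabilityMeasure μ]
    (hg : Integrable g μ) {α : ℝ} (hα : 1 / 2 ≤ α) {c z : ℝ} (hcz : c ≤ z) :
    ∫ ω, expectileIdentification α (g ω - z) ∂μ + (1 - α) * (z - c)
      ≤ ∫ ω, expectileIdentification α (g ω - c) ∂μ := by
  have hconst : ∫ _ : Ω, (1 - α) * (z - c) ∂μ = (1 - α) * (z - c) := by simp
  rw [← hconst, ← integral_add (integrable_expectileIdentification hg α z) (integrable_const _)]
  refine integral_mono ((integrable_expectileIdentification hg α z).add (integrable_const _))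
    (integrable_expectileIdentification hg α c) fun ω ↦ ?_
  have := add_mul_sub_le hα (sub_le_sub_left hcz (g ω))
  rwa [sub_sub_sub_cancel_left] at this

lemma le_of_integral_expectileIdentification_nonpos [IsProbabilityMeasure μ]
    (hg : Integrable g μ) {α : ℝ} (hα : α ∈ Set.Ico (1 / 2 : ℝ) 1) {c z : ℝ}
    (hz : ∫ ω, expectileIdentification α (g ω - z) ∂μ = 0)
    (hc : ∫ ω, expectileIdentification α (g ω - c) ∂μ ≤ 0) :
    z ≤ c := by
  by_contra! hcz
  have hslope := integral_expectileIdentification_add_mul_sub_le hg hα.1 hcz.le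
  have : 0 < (1 - α) * (z - c) := mul_pos (by linarith [hα.2]) (by linarith)
  linarith

end Integral

theorem expectile_subadditive
    {Ω : Type*} [MeasurableSpace Ω] (μ : Measure Ω) [IsProbabilityMeasure μ]
    (X Y : Ω → ℝ) (hX : MemLp X 2 μ) (hY : MemLp Y 2 μ)
    (α : ℝ) (hα : α ∈ Set.Ico (1/2 : ℝ) 1) (x y z : ℝ)
    (hx : α * ∫ ω, max (X ω - x) 0 ∂μ = (1-α) * ∫ ω, max (x - X ω) 0 ∂μ)
    (hy : α * ∫ ω, max (Y ω - y) 0 ∂μ = (1-α) * ∫ ω, max (y - Y ω) 0 ∂μ)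
    (hz : α * ∫ ω, max ((X ω + Y ω) - z) 0 ∂μ
        = (1-α) * ∫ ω, max (z - (X ω + Y ω)) 0 ∂μ) :
    z ≤ x + y := by
  have hXi : Integrable X μ := hX.integrable (by norm_num)
  have hYi : Integrable Y μ := hY.integrable (by norm_num)
  have hXYi : Integrable (fun ω ↦ X ω + Y ω) μ := hXi.add hYi
  have hX0 : ∫ ω, expectileIdentification α (X ω - x) ∂μ = 0 := by
    rw [integral_expectileIdentification hXi, hx, sub_self]
  have hY0 : ∫ ω, expectileIdentification α (Y ω - y) ∂μ = 0 := by
    rw [integral_expectileIdentification hYi, hy, sub_self]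
  have hZ0 : ∫ ω, expectileIdentification α (X ω + Y ω - z) ∂μ = 0 := by
    rw [integral_expectileIdentification hXYi, hz, sub_self]
  refine le_of_integral_expectileIdentification_nonpos hXYi hα hZ0 ?_
  calc ∫ ω, expectileIdentification α (X ω + Y ω - (x + y)) ∂μ
      ≤ ∫ ω, (expectileIdentification α (X ω - x) + expectileIdentification α (Y ω - y)) ∂μ :=
        integral_mono (integrable_expectileIdentification hXYi α _)
          ((integrable_expectileIdentification hXi α x).add
            (integrable_expectileIdentification hYi α y))
          fun ω ↦ by simpa only [add_sub_add_comm] using add_le hα.1 (X ω - x) (Y ω - y)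
    _ = 0 := by
        rw [integral_add (integrable_expectileIdentification hXi α x)
          (integrable_expectileIdentification hYi α y), hX0, hY0, add_zero]
end

section
/- Pseudo-invariance under diagonal linear transformations: for b ∈ (0,∞)^d with V = diag(b) and a ∈ ℝ^d, e_α^Σ(VX + a) = V·e_α^{VΣV}(X) + a. -/
open MeasureTheory Matrix

/-!
Substituting `x = V z + a` turns the `Σ`-loss of `V X + a` into the `VΣV`-loss of `X`, because
positive parts commute with multiplication by `b > 0`; hence `V e_X + a` minimizes the `Σ`-risk of
`V X + a`. That risk is strictly convex, so its minimizer is unique. Strict convexity comes from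
the identity `Q(θu + (1-θ)v) + θ(1-θ) Q(u - v) = θ Q(u) + (1-θ) Q(v)` for `Q(u) = uᵀΣu`: since `Σ`
has nonnegative entries, `Q` is monotone on the positive orthant, so the positive parts satisfy the
same relation with `≤`, and the defect `θ(1-θ) Q(u⁺ - v⁺)` (or its analogue for negative parts) is
strictly positive by positive definiteness.
-/

lemma posPart_smul_add_smul_le {E : Type*} [AddCommGroup E] [Lattice E] [IsOrderedAddMonoid E]
    [Module ℝ E] [PosSMulMono ℝ E] {a b : ℝ} (ha : 0 ≤ a) (hb : 0 ≤ b) (u v : E) :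
    (a • u + b • v)⁺ ≤ a • u⁺ + b • v⁺ :=
  sup_le (add_le_add (smul_le_smul_of_nonneg_left (le_posPart u) ha)
      (smul_le_smul_of_nonneg_left (le_posPart v) hb))
    (add_nonneg (smul_nonneg ha (posPart_nonneg u)) (smul_nonneg hb (posPart_nonneg v)))

section Expectile

variable {ι : Type*} [Fintype ι]

lemma dotProduct_mulVec_self_le_of_nonneg {S : Matrix ι ι ℝ} (hS : ∀ i j, 0 ≤ S i j)
    {u v : ι → ℝ} (hu : 0 ≤ u) (huv : u ≤ v) :
    u ⬝ᵥ S *ᵥ u ≤ v ⬝ᵥ S *ᵥ v := by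
  have hv : 0 ≤ v := hu.trans huv
  simp only [dotProduct, mulVec]
  gcongr with i _ j _
  · exact Finset.sum_nonneg fun j _ => mul_nonneg (hS i j) (hu j)
  · exact hv i
  · exact huv i
  · exact hS i j
  · exact huv j

lemma smul_add_smul_dotProduct_mulVec (S : Matrix ι ι ℝ) {a b : ℝ} (hab : a + b = 1) (u v : ι → ℝ) :
    (a • u + b • v) ⬝ᵥ S *ᵥ (a • u + b • v) + a * b * ((u - v) ⬝ᵥ S *ᵥ (u - v))
      = a * (u ⬝ᵥ S *ᵥ u) + b * (v ⬝ᵥ S *ᵥ v) := by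
  obtain rfl : b = 1 - a := by linarith
  simp only [mulVec_add, mulVec_sub, mulVec_smul, add_dotProduct, dotProduct_add, sub_dotProduct,
    dotProduct_sub, smul_dotProduct, dotProduct_smul, smul_eq_mul]
  ring

lemma posPart_dotProduct_mulVec_smul_add_smul_le {S : Matrix ι ι ℝ} (hS : ∀ i j, 0 ≤ S i j)
    {a b : ℝ} (ha : 0 ≤ a) (hb : 0 ≤ b) (hab : a + b = 1) (u v : ι → ℝ) :
    (a • u + b • v)⁺ ⬝ᵥ S *ᵥ (a • u + b • v)⁺ + a * b * ((u⁺ - v⁺) ⬝ᵥ S *ᵥ (u⁺ - v⁺))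
      ≤ a * (u⁺ ⬝ᵥ S *ᵥ u⁺) + b * (v⁺ ⬝ᵥ S *ᵥ v⁺) := by
  have := dotProduct_mulVec_self_le_of_nonneg hS (posPart_nonneg _)
    (posPart_smul_add_smul_le ha hb u v)
  linarith [smul_add_smul_dotProduct_mulVec S hab u⁺ v⁺]

noncomputable def expectileLoss (S : Matrix ι ι ℝ) (α : ℝ) (y x : ι → ℝ) : ℝ :=
  α * ((y - x)⁺ ⬝ᵥ S *ᵥ (y - x)⁺) + (1 - α) * ((x - y)⁺ ⬝ᵥ S *ᵥ (x - y)⁺)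

lemma strictConvexOn_expectileLoss {S : Matrix ι ι ℝ} (hS : S.PosDef) (hS₀ : ∀ i j, 0 ≤ S i j)
    {α : ℝ} (hα : α ∈ Set.Ioo 0 1) (y : ι → ℝ) :
    StrictConvexOn ℝ Set.univ (expectileLoss S α y) := by
  refine ⟨convex_univ, fun x _ z _ hxz a b ha hb hab => ?_⟩
  have hup : y - (a • x + b • z) = a • (y - x) + b • (y - z) := by
    linear_combination (norm := module) -(hab • y)
  have hdown : a • x + b • z - y = a • (x - y) + b • (z - y) := by
    linear_combination (norm := module) hab • y
  have hne : (y - x)⁺ - (y - z)⁺ ≠ 0 ∨ (x - y)⁺ - (z - y)⁺ ≠ 0 := by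
    by_contra! h
    have hdecomp : ∀ w : ι → ℝ, w = w⁺ - (-w)⁺ := fun w => by
      rw [posPart_neg, posPart_sub_negPart]
    have : y - x = y - z := by
      rw [hdecomp (y - x), hdecomp (y - z), neg_sub, neg_sub, sub_eq_zero.1 h.1,
        sub_eq_zero.1 h.2]
    exact hxz (sub_right_inj.1 this)
  have hQ : ∀ w : ι → ℝ, 0 ≤ w ⬝ᵥ S *ᵥ w := by
    simpa using hS.posSemidef.dotProduct_mulVec_nonneg
  obtain ⟨hα₀, hα₁⟩ := hα
  have hgap : 0 < α * (((y - x)⁺ - (y - z)⁺) ⬝ᵥ S *ᵥ ((y - x)⁺ - (y - z)⁺))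
      + (1 - α) * (((x - y)⁺ - (z - y)⁺) ⬝ᵥ S *ᵥ ((x - y)⁺ - (z - y)⁺)) := by
    rcases hne with h | h
    · have := hS.dotProduct_mulVec_pos h
      rw [star_trivial] at this
      exact add_pos_of_pos_of_nonneg (mul_pos hα₀ this)
        (mul_nonneg (sub_nonneg.2 hα₁.le) (hQ _))
    · have := hS.dotProduct_mulVec_pos h
      rw [star_trivial] at this
      exact add_pos_of_nonneg_of_pos (mul_nonneg hα₀.le (hQ _))
        (mul_pos (sub_pos.2 hα₁) this)
  have hpos := posPart_dotProduct_mulVec_smul_add_smul_le hS₀ ha.le hb.le hab (y - x) (y - z)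
  have hneg := posPart_dotProduct_mulVec_smul_add_smul_le hS₀ ha.le hb.le hab (x - y) (z - y)
  simp only [expectileLoss, smul_eq_mul, hup, hdown]
  linarith [mul_le_mul_of_nonneg_left hpos hα₀.le,
    mul_le_mul_of_nonneg_left hneg (sub_nonneg.2 hα₁.le), mul_pos (mul_pos ha hb) hgap]

end Expectile

lemma strictConvexOn_integral {Ω E : Type*} [MeasurableSpace Ω] {μ : Measure Ω} [NeZero μ]
    [AddCommGroup E] [Module ℝ E] {s : Set E} {f : Ω → E → ℝ}
    (hf : ∀ ω, StrictConvexOn ℝ s (f ω)) (hfi : ∀ x ∈ s, Integrable (f · x) μ) :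
    StrictConvexOn ℝ s fun x => ∫ ω, f ω x ∂μ := by
  obtain ⟨ω₀⟩ := μ.nonempty_of_neZero
  refine ⟨(hf ω₀).1, fun x hx y hy hxy a b ha hb hab => ?_⟩
  have hmem := (hf ω₀).1 hx hy ha.le hb.le hab
  have hgap : ∀ ω, 0 < a * f ω x + b * f ω y - f ω (a • x + b • y) :=
    fun ω => sub_pos.2 ((hf ω).2 hx hy hxy ha hb hab)
  have hcomb : Integrable (fun ω => a * f ω x + b * f ω y) μ :=
    ((hfi x hx).const_mul a).add ((hfi y hy).const_mul b)
  have hpos : 0 < ∫ ω, (a * f ω x + b * f ω y - f ω (a • x + b • y)) ∂μ := by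
    rw [integral_pos_iff_support_of_nonneg (fun ω => (hgap ω).le) (hcomb.sub (hfi _ hmem)),
      Function.support_eq_univ fun ω => (hgap ω).ne']
    exact Measure.measure_univ_pos.2 (NeZero.ne μ)
  rw [integral_sub hcomb (hfi _ hmem), integral_add ((hfi x hx).const_mul a)
    ((hfi y hy).const_mul b), integral_const_mul, integral_const_mul] at hpos
  simp only [smul_eq_mul]
  linarith

section Risk

variable {Ω ι : Type*} [MeasurableSpace Ω] {μ : Measure Ω} [Fintype ι]

lemma integrable_dotProduct_mulVec (S : Matrix ι ι ℝ) {U : Ω → ι → ℝ}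
    (hU : ∀ i, MemLp (fun ω => U ω i) 2 μ) :
    Integrable (fun ω => U ω ⬝ᵥ S *ᵥ U ω) μ := by
  simp only [dotProduct, mulVec, Finset.mul_sum]
  refine integrable_finsetSum _ fun i _ => integrable_finsetSum _ fun j _ => ?_
  refine (((hU i).integrable_mul (hU j)).const_mul (S i j)).congr (ae_of_all _ fun ω => ?_)
  simp only [Pi.mul_apply]
  ring

lemma integrable_expectileLoss [IsFiniteMeasure μ] (S : Matrix ι ι ℝ) (α : ℝ) {Y : Ω → ι → ℝ}
    (hY : ∀ i, MemLp (fun ω => Y ω i) 2 μ) (x : ι → ℝ) :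
    Integrable (fun ω => expectileLoss S α (Y ω) x) μ :=
  ((integrable_dotProduct_mulVec S fun i => ((hY i).sub (memLp_const (x i))).pos_part).const_mul
      α).add
    ((integrable_dotProduct_mulVec S fun i => ((memLp_const (x i)).sub (hY i)).pos_part).const_mul
      (1 - α))

variable (μ) in
noncomputable def expectileRisk (S : Matrix ι ι ℝ) (α : ℝ) (Y : Ω → ι → ℝ) (x : ι → ℝ) : ℝ :=
  ∫ ω, expectileLoss S α (Y ω) x ∂μ

lemma strictConvexOn_expectileRisk [IsFiniteMeasure μ] [NeZero μ] {S : Matrix ι ι ℝ}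
    (hS : S.PosDef) (hS₀ : ∀ i j, 0 ≤ S i j) {α : ℝ} (hα : α ∈ Set.Ioo 0 1) {Y : Ω → ι → ℝ}
    (hY : ∀ i, MemLp (fun ω => Y ω i) 2 μ) :
    StrictConvexOn ℝ Set.univ (expectileRisk μ S α Y) :=
  strictConvexOn_integral (fun ω => strictConvexOn_expectileLoss hS hS₀ hα (Y ω))
    fun x _ => integrable_expectileLoss S α hY x

end Risk

section Diagonal

variable {ι : Type*} [Fintype ι] [DecidableEq ι]

lemma mul_dotProduct_mulVec_mul (S : Matrix ι ι ℝ) (b w : ι → ℝ) :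
    (b * w) ⬝ᵥ S *ᵥ (b * w) = w ⬝ᵥ (diagonal b * S * diagonal b) *ᵥ w := by
  have hD : ∀ v, diagonal b *ᵥ v = b * v := fun v => funext (mulVec_diagonal b v)
  have hD' : w ᵥ* diagonal b = b * w := funext fun i => by rw [vecMul_diagonal, mul_comm]; rfl
  rw [← mulVec_mulVec, ← mulVec_mulVec, dotProduct_mulVec w, hD', hD]

lemma expectileLoss_mul_add (S : Matrix ι ι ℝ) (α : ℝ) {b : ι → ℝ} (hb : 0 ≤ b) (a y x : ι → ℝ) :
    expectileLoss S α (b * y + a) (b * x + a)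
      = expectileLoss (diagonal b * S * diagonal b) α y x := by
  have hscale : ∀ u v : ι → ℝ, (b * u + a - (b * v + a))⁺ = b * (u - v)⁺ := fun u v =>
    funext fun i => by
      show max (b i * u i + a i - (b i * v i + a i)) 0 = b i * max (u i - v i) 0
      rw [mul_max_of_nonneg _ _ (hb i), mul_zero, mul_sub]
      ring_nf
  simp only [expectileLoss, hscale, mul_dotProduct_mulVec_mul]

variable {Ω : Type*} [MeasurableSpace Ω] {μ : Measure Ω}

lemma expectileRisk_mul_add (S : Matrix ι ι ℝ) (α : ℝ) {b : ι → ℝ} (hb : 0 ≤ b) (a : ι → ℝ)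
    (Y : Ω → ι → ℝ) (x : ι → ℝ) :
    expectileRisk μ S α (fun ω => b * Y ω + a) (b * x + a)
      = expectileRisk μ (diagonal b * S * diagonal b) α Y x := by
  simp only [expectileRisk, expectileLoss_mul_add S α hb]

lemma isMinOn_expectileRisk_mul_add {S : Matrix ι ι ℝ} {α : ℝ} {b : ι → ℝ} (hb : ∀ i, 0 < b i)
    (a : ι → ℝ) {Y : Ω → ι → ℝ} {e : ι → ℝ}
    (he : IsMinOn (expectileRisk μ (diagonal b * S * diagonal b) α Y) Set.univ e) :
    IsMinOn (expectileRisk μ S α (fun ω => b * Y ω + a)) Set.univ (b * e + a) := by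
  intro x _
  have hx : b * ((x - a) / b) + a = x := funext fun i => by
    simp [mul_div_cancel₀ _ (hb i).ne']
  have hb₀ : 0 ≤ b := fun i => (hb i).le
  rw [Set.mem_ofPred_eq, ← hx, expectileRisk_mul_add S α hb₀, expectileRisk_mul_add S α hb₀]
  exact he trivial

end Diagonal

theorem sigma_expectile_diagonal_pseudo_invariance
    {Ω : Type*} [MeasurableSpace Ω] (μ : Measure Ω) [IsProbabilityMeasure μ]
    {d : ℕ} (S : Matrix (Fin d) (Fin d) ℝ) (hS : S.PosDef) (hpos : ∀ i j, 0 < S i j)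
    (X : Ω → Fin d → ℝ) (hm : Measurable X)
    (hint : ∀ i j, Integrable (fun ω => |X ω i * X ω j|) μ)
    (α : ℝ) (hα : α ∈ Set.Ioo (0:ℝ) 1)
    (b : Fin d → ℝ) (hb : ∀ i, 0 < b i) (a : Fin d → ℝ)
    (eV eX : Fin d → ℝ)
    -- eV is the Σ-expectile of V X + a, where V = diag(b)
    (heV : IsMinOn
      (fun x : Fin d → ℝ => ∫ ω,
        α * ((fun i => max ((b i * X ω i + a i) - x i) 0) ⬝ᵥ
              S.mulVec (fun i => max ((b i * X ω i + a i) - x i) 0))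
        + (1-α) * ((fun i => max (x i - (b i * X ω i + a i)) 0) ⬝ᵥ
              S.mulVec (fun i => max (x i - (b i * X ω i + a i)) 0)) ∂μ)
      Set.univ eV)
    -- eX is the (VΣV)-expectile of X
    (heX : IsMinOn
      (fun x : Fin d → ℝ => ∫ ω,
        α * ((fun i => max (X ω i - x i) 0) ⬝ᵥ
              ((Matrix.diagonal b * S * Matrix.diagonal b).mulVec
                (fun i => max (X ω i - x i) 0)))
        + (1-α) * ((fun i => max (x i - X ω i) 0) ⬝ᵥ
              ((Matrix.diagonal b * S * Matrix.diagonal b).mulVec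
                (fun i => max (x i - X ω i) 0))) ∂μ)
      Set.univ eX) :
    eV = fun i => b i * eX i + a i := by
  have hX : ∀ i, MemLp (fun ω => X ω i) 2 μ := fun i =>
    (memLp_two_iff_integrable_sq ((measurable_pi_apply i).comp hm).aestronglyMeasurable).2 <|
      (hint i i).congr (ae_of_all _ fun ω => (abs_mul_self _).trans (sq _).symm)
  have hY : ∀ i, MemLp (fun ω => (b * X ω + a) i) 2 μ := fun i =>
    ((hX i).const_mul (b i)).add (memLp_const (a i))
  -- `heV` and `heX` are `IsMinOn` for `expectileRisk` once `posPart` on `Fin d → ℝ` unfolds to `max`.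
  exact (strictConvexOn_expectileRisk hS (fun i j => (hpos i j).le) hα hY).eq_of_isMinOn heV
    (isMinOn_expectileRisk_mul_add hb a heX) trivial trivial
end
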